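/- Let S = {g_1, ..., g_m} be a proper (n, m, t)-nested divisible difference set for G relative to (A, Lambda) with t >= 2, A = {A_0, A_1, ..., A_t} and Lambda = {lambda_1, ..., lambda_t}, and let s in {1, ..., t-1} be the smallest integer with lambda_s != lambda_{s+1}. Set alpha_1 = sqrt(1/m - lambda_1/m^2) and alpha_2 = sqrt(alpha_1^2 + (lambda_s - lambda_{s+1})*|A_s|/m^2). If F is the G-harmonic frame generated by S, then: (1) alpha_1 and alpha_2 both occur among the frame angles of F; and (2) F is biangular if and only if for every r in {s+1, ..., t-1}, either sum_{j=s}^{r} (lambda_j - lambda_{j+1})*|A_j| = 0 or sum_{j=s+1}^{r} (lambda_j - lambda_{j+1})*|A_j| = 0. -/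

import Mathlib

open Finset

/-- The underlying finite abelian group `G = ZMod n₁ ⊕ ... ⊕ ZMod n_k`
(a fixed cyclic decomposition). -/
abbrev PiG {k : ℕ} (nn : Fin k → ℕ) : Type := ∀ i, ZMod (nn i)

/-- The character `ρ_x(y) = exp(2πi (x(1)y(1)/n₁ + ... + x(k)y(k)/n_k))`. -/
noncomputable def rho {k : ℕ} (nn : Fin k → ℕ) (x y : PiG nn) : ℂ :=
  Complex.exp (2 * (Real.pi : ℂ) * Complex.I *
    ∑ i, ((x i).val : ℂ) * ((y i).val : ℂ) / ((nn i : ℕ) : ℂ))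

/-- The vector `f_x = (1/√m) (ρ_{g_j}(x))_{j=1}^m` of the `G`-harmonic frame
generated by `S = {g_1, ..., g_m}`. -/
noncomputable def harm {k m : ℕ} (nn : Fin k → ℕ) (g : Fin m → PiG nn) (x : PiG nn) :
    EuclideanSpace ℂ (Fin m) :=
  (WithLp.equiv 2 (Fin m → ℂ)).symm fun j => ((Real.sqrt m : ℝ) : ℂ)⁻¹ * rho nn (g j) x

/-- The frame angle `|⟨f_x, f_y⟩|`. -/
noncomputable def ang {k m : ℕ} (nn : Fin k → ℕ) (g : Fin m → PiG nn) (x y : PiG nn) : ℝ :=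
  ‖(inner ℂ (harm nn g x) (harm nn g y) : ℂ)‖

/-- The set of frame angles `Θ = { |⟨f_x, f_y⟩| : x ≠ y }` of the harmonic frame. -/
noncomputable def anglesSet {k m : ℕ} (nn : Fin k → ℕ) (g : Fin m → PiG nn) : Set ℝ :=
  {r : ℝ | ∃ x y : PiG nn, x ≠ y ∧ ang nn g x y = r}

/-- The harmonic frame is a tight frame (with the forced constant `n/m`):
`∑_x f_x ⊗ f_x^* = (n/m) I_m` as operators. -/
noncomputable def IsTightHarm {k m : ℕ} (nn : Fin k → ℕ) [∀ i, NeZero (nn i)]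
    (g : Fin m → PiG nn) : Prop :=
  ∀ v : EuclideanSpace ℂ (Fin m),
    ∑ x : PiG nn, (inner ℂ (harm nn g x) v : ℂ) • harm nn g x =
      ((Fintype.card (PiG nn) : ℂ) / (m : ℂ)) • v

/-- `diffCount g x` is the number of ways to write `x = g_a - g_b` with `g_a ≠ g_b`
distinct elements of `S = {g_1, ..., g_m}`. -/
noncomputable def diffCount {G : Type*} [AddCommGroup G] {m : ℕ} (g : Fin m → G) (x : G) : ℕ :=
  Nat.card {p : Fin m × Fin m // p.1 ≠ p.2 ∧ g p.1 - g p.2 = x}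

/-- `S = {g_1, ..., g_m}` is an `(n, m, t)`-nested difference set for `G` relative to
`(A, Λ)`: `A 0 = {0}`, `A t = G`, the `A j` are increasing, and every element of
`A (j+1) \ A j` is a difference of distinct elements of `S` in exactly `Λ (j+1)` ways. -/
def IsNestedDS {G : Type*} [AddCommGroup G] {m : ℕ} (g : Fin m → G) (t : ℕ)
    (A : ℕ → Set G) (lam : ℕ → ℕ) : Prop :=
  A 0 = {0} ∧ A t = Set.univ ∧ (∀ j, j < t → A j ⊆ A (j + 1)) ∧
    (∀ j, j < t → ∀ x ∈ A (j + 1), x ∉ A j → diffCount g x = lam (j + 1))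

/-!
For a character `ψ ≠ 0` of `G`, `|∑ⱼ ψ (g j)|² = m + ∑_z λ(z) ψ(z)`, where `λ(z)` is the number of
representations of `z` as a difference. For a nested difference set `λ` is a combination of the
indicators of the `A j`, so orthogonality of characters on subgroups gives
`|∑ⱼ ψ (g j)|² = Vᵣ := m - λ₁ + ∑_{1 ≤ j ≤ r} (λⱼ - λⱼ₊₁) |A j|` when `ψ` is trivial on exactly
`A 1, …, A r`. Properness makes the chain strict, so every level `r ≤ t - 1` is attained. The
frame angle `|⟨f_x, f_y⟩|` is `|∑ⱼ ψ (g j)| / m` for `ψ = ρ_{y - x}`, which runs over all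
nontrivial characters, so the angles are the numbers `√Vᵣ / m` with `r ≤ t - 1`. Here `V₀` and
`V_s` give `α₁ ≠ α₂`, and the frame is biangular iff each `Vᵣ` is `V₀` or `V_s`.
-/
lemma Nat.exists_forall_iff_le_of_upward {P : ℕ → Prop} {t : ℕ}
    (hP : ∀ i j, i ≤ j → j ≤ t → P i → P j) (ht : P t) :
    ∃ k ≤ t, ∀ j ≤ t, P j ↔ k ≤ j := by
  classical
  exact ⟨Nat.find ⟨t, ht⟩, Nat.find_min' _ ht, fun j hj =>
    ⟨Nat.find_min' _, fun hkj => hP _ j hkj hj (Nat.find_spec ⟨t, ht⟩)⟩⟩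

lemma Nat.exists_forall_iff_le_of_downward {P : ℕ → Prop} {t : ℕ}
    (hP : ∀ i j, i ≤ j → j ≤ t → P j → P i) (h0 : P 0) :
    ∃ r ≤ t, ∀ j ≤ t, P j ↔ j ≤ r := by
  classical
  exact ⟨Nat.findGreatest P t, Nat.findGreatest_le t, fun j hj =>
    ⟨Nat.le_findGreatest hj, fun hjr => hP j _ hjr (Nat.findGreatest_le t)
      (Nat.findGreatest_spec (Nat.zero_le t) h0)⟩⟩

lemma Set.ncard_image_Iic_eq_two_iff {α : Type*} (f : ℕ → α) {n a b : ℕ} (ha : a ≤ n)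
    (hb : b ≤ n) (hab : f a ≠ f b) :
    (f '' Set.Iic n).ncard = 2 ↔ ∀ r ≤ n, f r = f a ∨ f r = f b := by
  have hpair : {f a, f b} ⊆ f '' Set.Iic n := by
    rintro x (rfl | rfl)
    exacts [⟨a, ha, rfl⟩, ⟨b, hb, rfl⟩]
  constructor
  · intro h2 r hr
    have := Set.eq_of_subset_of_ncard_le hpair (by rw [h2, Set.ncard_pair hab])
      ((Set.finite_Iic n).image f)
    exact (this ▸ Set.mem_image_of_mem f (Set.mem_Iic.mpr hr) : f r ∈ ({f a, f b} : Set α))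
  · intro h
    rw [← Set.ncard_pair hab]
    congr 1
    refine Set.Subset.antisymm ?_ hpair
    rintro _ ⟨r, hr, rfl⟩
    exact h r hr

lemma sum_Icc_eq_zero_or_eq_iff (c : ℕ → ℤ) (s n : ℕ) :
    (∀ r ≤ n, ∑ j ∈ Icc s r, c j = 0 ∨ ∑ j ∈ Icc s r, c j = c s) ↔
      ∀ r, s + 1 ≤ r → r ≤ n → ∑ j ∈ Icc s r, c j = 0 ∨ ∑ j ∈ Icc (s + 1) r, c j = 0 := by
  have hsplit : ∀ r, s ≤ r → ∑ j ∈ Icc s r, c j = c s + ∑ j ∈ Icc (s + 1) r, c j := fun r hr => by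
    rw [Finset.Icc_add_one_left_eq_Ioc, Finset.add_sum_Ioc_eq_sum_Icc hr]
  constructor
  · intro h r hr1 hrn
    rcases h r hrn with h0 | hs
    · exact .inl h0
    · exact .inr (by linarith [hsplit r (by omega)])
  · intro h r hrn
    rcases lt_trichotomy r s with hrs | rfl | hrs
    · exact .inl (by rw [Finset.Icc_eq_empty (by omega), Finset.sum_empty])
    · exact .inr (by rw [Finset.Icc_self, Finset.sum_singleton])
    · rcases h r hrs hrn with h0 | h1
      · exact .inl h0
      · exact .inr (by rw [hsplit r hrs.le, h1, add_zero])

section Differences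
variable {G : Type*} [AddCommGroup G] {m t : ℕ} {g : Fin m → G} {A : ℕ → Set G} {lam : ℕ → ℕ}

lemma diffCount_eq_card [DecidableEq G] (z : G) :
    diffCount g z = #{p ∈ univ.offDiag | g p.1 - g p.2 = z} := by
  rw [diffCount, Nat.card_eq_fintype_card, Fintype.card_subtype]
  congr 1
  ext p
  simp

lemma diffCount_zero (hg : Function.Injective g) : diffCount g 0 = 0 := by
  classical
  rw [diffCount_eq_card, Finset.card_eq_zero, Finset.filter_eq_empty_iff]
  intro p hp hz
  exact (Finset.mem_offDiag.mp hp).2.2 (hg (sub_eq_zero.mp hz))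

lemma IsNestedDS.subset_of_le (h : IsNestedDS g t A lam) {i j : ℕ} (hij : i ≤ j) (hjt : j ≤ t) :
    A i ⊆ A j := by
  induction j, hij using Nat.le_induction with
  | base => exact le_rfl
  | succ j hij ih => exact (ih (by omega)).trans (h.2.2.1 j (by omega))

lemma IsNestedDS.zero_mem (h : IsNestedDS g t A lam) {j : ℕ} (hj : j ≤ t) : (0 : G) ∈ A j :=
  h.subset_of_le (Nat.zero_le j) hj (h.1 ▸ rfl)

/-- Deleting the repeated term `A (j + 1) = A j` of the chain leaves a nested difference set
with one level fewer. -/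
lemma IsNestedDS.skip (h : IsNestedDS g t A lam) {j : ℕ} (hj : j < t) (hrep : A j = A (j + 1)) :
    IsNestedDS g (t - 1) (fun i => A (if i ≤ j then i else i + 1))
      (fun i => lam (if i ≤ j then i else i + 1)) := by
  obtain ⟨h0, htop, hmono, hcount⟩ := h
  have hstep : ∀ i < t - 1, ∃ q < t, A (if i ≤ j then i else i + 1) = A q ∧
      (if i + 1 ≤ j then i + 1 else i + 1 + 1) = q + 1 := by
    intro i hi
    rcases lt_trichotomy i j with hij | rfl | hij
    · exact ⟨i, by omega, by rw [if_pos hij.le], by rw [if_pos (by omega)]⟩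
    · exact ⟨i + 1, by omega, by rw [if_pos le_rfl, hrep], by rw [if_neg (by omega)]⟩
    · exact ⟨i + 1, by omega, by rw [if_neg (by omega)], by rw [if_neg (by omega)]⟩
  refine ⟨by simpa using h0, ?_, fun i hi => ?_, fun i hi x hx hx' => ?_⟩
  · show A (if t - 1 ≤ j then t - 1 else t - 1 + 1) = Set.univ
    split_ifs with htj
    · rwa [show t - 1 = j by omega, hrep, show j + 1 = t by omega]
    · rwa [Nat.sub_add_cancel (by omega)]
  · obtain ⟨q, hq, hA, hsucc⟩ := hstep i hi
    simp only [hA, hsucc]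
    exact hmono q hq
  · obtain ⟨q, hq, hA, hsucc⟩ := hstep i hi
    simp only [hA, hsucc] at hx hx' ⊢
    exact hcount q hq x hx hx'

open scoped Classical in
/-- An element of `A k \ A (k - 1)` lies in exactly `A k, …, A t`, so the sum telescopes to
`lam k - lam t`. -/
lemma IsNestedDS.diffCount_eq (h : IsNestedDS g t A lam) (hg : Function.Injective g)
    (ht : 1 ≤ t) (z : G) :
    (diffCount g z : ℤ) = lam t + ∑ j ∈ Icc 1 (t - 1),
      ((lam j : ℤ) - lam (j + 1)) * (if z ∈ A j then 1 else 0) -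
      if z = 0 then (lam 1 : ℤ) else 0 := by
  obtain ⟨k, hkt, hk⟩ := Nat.exists_forall_iff_le_of_upward (P := (z ∈ A ·))
    (fun i j hij hjt hz => h.subset_of_le hij hjt hz) (h.2.1 ▸ Set.mem_univ z)
  have hfilter : (Icc 1 (t - 1)).filter (fun j => z ∈ A j) = Ico (max k 1) t := by
    ext j
    simp only [Finset.mem_filter, Finset.mem_Icc, Finset.mem_Ico]
    constructor
    · rintro ⟨hj, hz⟩
      have := (hk j (by omega)).mp hz
      omega
    · intro hj
      exact ⟨by omega, (hk j (by omega)).mpr (by omega)⟩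
  have hsum : ∑ j ∈ Icc 1 (t - 1), ((lam j : ℤ) - lam (j + 1)) * (if z ∈ A j then 1 else 0)
      = lam (max k 1) - lam t := by
    simp only [mul_ite, mul_one, mul_zero]
    rw [← Finset.sum_filter, hfilter]
    have := Finset.sum_Ico_sub (fun j => (lam j : ℤ)) (show max k 1 ≤ t by omega)
    rw [← neg_sub, ← this, ← Finset.sum_neg_distrib]
    simp
  rw [hsum]
  rcases Nat.eq_zero_or_pos k with rfl | hk0
  · have hz : z = 0 := by simpa [h.1] using (hk 0 (Nat.zero_le t)).mpr le_rfl
    simp [hz, diffCount_zero hg]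
  · have hzk : z ∈ A (k - 1 + 1) := (hk _ (by omega)).mpr (by omega)
    have hzk' : z ∉ A (k - 1) := fun hz => by have := (hk _ (by omega)).mp hz; omega
    have hz : z ≠ 0 := fun hz => hzk' (hz ▸ h.zero_mem (by omega))
    rw [h.2.2.2 (k - 1) (by omega) z hzk hzk', if_neg hz, max_eq_left hk0, Nat.sub_add_cancel hk0]
    ring

variable [Fintype G]

lemma AddChar.sum_mem_addSubgroup (ψ : AddChar G ℂ) (H : AddSubgroup G) [DecidablePred (· ∈ H)] :
    ∑ z ∈ univ.filter (· ∈ H), ψ z = if ∀ z ∈ H, ψ z = 1 then (Nat.card H : ℂ) else 0 := by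
  classical
  rw [Finset.sum_subtype _ (fun _ => Finset.mem_filter_univ _)]
  have := AddChar.sum_eq_ite (ψ.compAddMonoidHom H.subtype)
  simp only [AddChar.compAddMonoidHom_apply, AddSubgroup.coe_subtype] at this
  rw [this, Nat.card_eq_fintype_card]
  congr 1
  simp [AddChar.eq_zero_iff]

lemma AddChar.exists_eq_one_on_of_lt {H K : AddSubgroup G} (hHK : H < K) :
    ∃ ψ : AddChar G ℂ, (∀ z ∈ H, ψ z = 1) ∧ ∃ z ∈ K, ψ z ≠ 1 := by
  obtain ⟨a, haK, haH⟩ := SetLike.exists_of_lt hHK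
  have ha : (a : G ⧸ H) ≠ 0 := by rwa [Ne, QuotientAddGroup.eq_zero_iff]
  obtain ⟨ψ, hψ⟩ := AddChar.exists_apply_ne_zero.mpr ha
  refine ⟨ψ.compAddMonoidHom (QuotientAddGroup.mk' H), fun z hz => ?_, a, haK, hψ⟩
  simp [(QuotientAddGroup.eq_zero_iff z).mpr hz]

lemma AddChar.normSq_sum_comp (ψ : AddChar G ℂ) (g : Fin m → G) :
    (Complex.normSq (∑ j, ψ (g j)) : ℂ) = m + ∑ z, (diffCount g z : ℂ) * ψ z := by
  classical
  have hpair : ∀ p : Fin m × Fin m,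
      ψ (g p.1) * (starRingEnd ℂ) (ψ (g p.2)) = ψ (g p.1 - g p.2) := fun p => by
    rw [← AddChar.map_neg_eq_conj, ← AddChar.map_add_eq_mul, sub_eq_add_neg]
  have hdiag : ∑ p ∈ (univ : Finset (Fin m)).diag, ψ (g p.1 - g p.2) = m := by
    rw [Finset.sum_congr rfl fun p hp => by rw [(Finset.mem_diag.mp hp).2, sub_self,
      AddChar.map_zero_eq_one], Finset.sum_const, Finset.diag_card]
    simp
  have hoff : ∑ p ∈ univ.offDiag, ψ (g p.1 - g p.2) = ∑ z, (diffCount g z : ℂ) * ψ z := by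
    rw [← Finset.sum_fiberwise univ.offDiag (fun p => g p.1 - g p.2)]
    refine Finset.sum_congr rfl fun z _ => ?_
    rw [diffCount_eq_card, Finset.sum_congr rfl fun p hp => by rw [(Finset.mem_filter.mp hp).2],
      Finset.sum_const, nsmul_eq_mul]
  rw [← Complex.mul_conj, map_sum, Finset.sum_mul_sum, ← Fintype.sum_prod_type',
    ← Finset.univ_product_univ, ← Finset.diag_union_offDiag,
    Finset.sum_union (Finset.disjoint_diag_offDiag _)]
  simp only [hpair, hdiag, hoff]

open scoped Classical in
lemma IsNestedDS.sum_diffCount_mul_addChar (h : IsNestedDS g t A lam)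
    (hg : Function.Injective g) (ht : 1 ≤ t) {ψ : AddChar G ℂ} (hψ : ψ ≠ 0) :
    ∑ z, (diffCount g z : ℂ) * ψ z = ∑ j ∈ Icc 1 (t - 1),
      ((lam j : ℂ) - lam (j + 1)) * ∑ z ∈ univ.filter (· ∈ A j), ψ z - lam 1 := by
  have hdiff : ∀ z, (diffCount g z : ℂ) = lam t + ∑ j ∈ Icc 1 (t - 1),
      ((lam j : ℂ) - lam (j + 1)) * (if z ∈ A j then 1 else 0) -
      if z = 0 then (lam 1 : ℂ) else 0 := fun z => by
    exact_mod_cast h.diffCount_eq hg ht z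
  simp only [hdiff, sub_mul, add_mul, Finset.sum_mul, Finset.sum_sub_distrib,
    Finset.sum_add_distrib, ← Finset.mul_sum, AddChar.sum_eq_zero_iff_ne_zero.mpr hψ, mul_zero,
    zero_add, mul_assoc, ite_mul, one_mul, zero_mul, Finset.sum_ite_eq', Finset.mem_univ, if_true,
    AddChar.map_zero_eq_one, mul_one]
  simp only [Finset.sum_filter, Finset.mul_sum]
  congr 2 <;> exact Finset.sum_comm

end Differences

section Levels
variable {G : Type*} [AddCommGroup G] {m t : ℕ} {g : Fin m → G} {A : ℕ → AddSubgroup G}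
  {lam : ℕ → ℕ}

/-- The value of `normSq (∑ j, ψ (g j))` for the characters `ψ ≠ 0` that are trivial on
`A 1, …, A r` and on no later `A j`. -/
noncomputable def levelNormSq (m : ℕ) (A : ℕ → AddSubgroup G) (lam : ℕ → ℕ) (r : ℕ) : ℤ :=
  m - lam 1 + ∑ j ∈ Icc 1 r, ((lam j : ℤ) - lam (j + 1)) * Nat.card (A j)

lemma levelNormSq_eq_of_lam_eq {s : ℕ} (hs1 : 1 ≤ s)
    (hsmin : ∀ j, 1 ≤ j → j < s → lam j = lam (j + 1)) (r : ℕ) :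
    levelNormSq m A lam r =
      m - lam 1 + ∑ j ∈ Icc s r, ((lam j : ℤ) - lam (j + 1)) * Nat.card (A j) := by
  rw [levelNormSq, ← Finset.sum_subset (Finset.Icc_subset_Icc hs1 le_rfl)]
  intro j hj hjs
  rw [Finset.mem_Icc] at hj hjs
  rw [hsmin j hj.1 (by omega), sub_self, zero_mul]

lemma IsNestedDS.lt_succ_of_proper (h : IsNestedDS g t (fun j => (A j : Set G)) lam)
    (hproper : ¬ ∃ (A' : ℕ → Set G) (lam' : ℕ → ℕ), IsNestedDS g (t - 1) A' lam') :
    ∀ j < t, A j < A (j + 1) := fun j hj =>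
  lt_of_le_of_ne (h.2.2.1 j hj) fun heq => hproper ⟨_, _, h.skip hj (congrArg SetLike.coe heq)⟩

variable [Fintype G]

lemma IsNestedDS.normSq_sum_addChar (h : IsNestedDS g t (fun j => (A j : Set G)) lam)
    (hg : Function.Injective g) (ht : 1 ≤ t) {ψ : AddChar G ℂ} (hψ : ψ ≠ 0) {r : ℕ}
    (hr : r ≤ t - 1) (hpat : ∀ j ≤ t - 1, (∀ z ∈ A j, ψ z = 1) ↔ j ≤ r) :
    Complex.normSq (∑ j, ψ (g j)) = levelNormSq m A lam r := by
  classical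
  have hterm : ∀ j ∈ Icc 1 (t - 1), ((lam j : ℂ) - lam (j + 1)) *
      ∑ z ∈ univ.filter (· ∈ (A j : Set G)), ψ z =
        if j ≤ r then ((lam j : ℂ) - lam (j + 1)) * Nat.card (A j) else 0 := fun j hj => by
    simp only [SetLike.mem_coe]
    rw [AddChar.sum_mem_addSubgroup, if_congr (hpat j (Finset.mem_Icc.mp hj).2) rfl rfl]
    split_ifs <;> simp
  have hfilter : (Icc 1 (t - 1)).filter (· ≤ r) = Icc 1 r := by
    ext j
    simp only [Finset.mem_filter, Finset.mem_Icc]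
    omega
  apply Complex.ofReal_injective
  rw [AddChar.normSq_sum_comp, h.sum_diffCount_mul_addChar hg ht hψ, Finset.sum_congr rfl hterm,
    ← Finset.sum_filter, hfilter, levelNormSq]
  push_cast
  ring

lemma IsNestedDS.exists_normSq_eq_levelNormSq (h : IsNestedDS g t (fun j => (A j : Set G)) lam)
    (hg : Function.Injective g) (ht : 1 ≤ t) {ψ : AddChar G ℂ} (hψ : ψ ≠ 0) :
    ∃ r ≤ t - 1, Complex.normSq (∑ j, ψ (g j)) = levelNormSq m A lam r := by
  have hA0 : (A 0 : Set G) = {0} := h.1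
  obtain ⟨r, hr, hpat⟩ := Nat.exists_forall_iff_le_of_downward
    (P := fun j => ∀ z ∈ A j, ψ z = 1) (t := t - 1)
    (fun i j hij hjt hj z hz => hj z (h.subset_of_le hij (by omega) hz))
    (fun z hz => by
      rw [show z = 0 from (hA0 ▸ SetLike.mem_coe.mpr hz : z ∈ ({0} : Set G)),
        AddChar.map_zero_eq_one])
  exact ⟨r, hr, h.normSq_sum_addChar hg ht hψ hr hpat⟩

lemma IsNestedDS.exists_addChar_normSq_eq_levelNormSq
    (h : IsNestedDS g t (fun j => (A j : Set G)) lam) (hg : Function.Injective g) (ht : 1 ≤ t)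
    (hlt : ∀ j < t, A j < A (j + 1)) {r : ℕ} (hr : r ≤ t - 1) :
    ∃ ψ : AddChar G ℂ, ψ ≠ 0 ∧ Complex.normSq (∑ j, ψ (g j)) = levelNormSq m A lam r := by
  obtain ⟨ψ, hψr, z, hz, hψz⟩ := AddChar.exists_eq_one_on_of_lt (hlt r (by omega))
  have hpat : ∀ j ≤ t - 1, (∀ z ∈ A j, ψ z = 1) ↔ j ≤ r := fun j hj => by
    refine ⟨fun hψj => ?_, fun hjr z' hz' => hψr z' (h.subset_of_le hjr (by omega) hz')⟩
    by_contra! hrj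
    exact hψz (hψj z (h.subset_of_le (show r + 1 ≤ j by omega) (by omega) hz))
  have hψ : ψ ≠ 0 := fun h0 => hψz (by simp [h0])
  exact ⟨ψ, hψ, h.normSq_sum_addChar hg ht hψ hr hpat⟩

lemma IsNestedDS.levelNormSq_nonneg (h : IsNestedDS g t (fun j => (A j : Set G)) lam)
    (hg : Function.Injective g) (ht : 1 ≤ t) (hlt : ∀ j < t, A j < A (j + 1)) {r : ℕ}
    (hr : r ≤ t - 1) : 0 ≤ levelNormSq m A lam r := by
  obtain ⟨ψ, -, hψr⟩ := h.exists_addChar_normSq_eq_levelNormSq hg ht hlt hr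
  exact_mod_cast hψr ▸ Complex.normSq_nonneg _

end Levels

section HarmonicFrame
variable {k m : ℕ} {nn : Fin k → ℕ} [∀ i, NeZero (nn i)] {g : Fin m → PiG nn}

lemma rho_eq_prod (x y : PiG nn) : rho nn x y = ∏ i, (ZMod.toCircle (x i * y i) : ℂ) := by
  rw [rho, Finset.mul_sum, Complex.exp_sum]
  refine Finset.prod_congr rfl fun i _ => ?_
  have hval : x i * y i = (((x i).val * (y i).val : ℕ) : ZMod (nn i)) := by simp
  rw [hval, ZMod.toCircle_natCast]
  congr 1
  push_cast
  ring

lemma rho_comm (x y : PiG nn) : rho nn x y = rho nn y x := by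
  simp only [rho_eq_prod, mul_comm]

lemma rho_single_one (i : Fin k) (y : PiG nn) :
    rho nn (Pi.single i 1) y = ZMod.toCircle (y i) := by
  rw [rho_eq_prod, Finset.prod_eq_single i]
  · simp
  · intro j _ hj
    simp [Pi.single_eq_of_ne hj]
  · simp

noncomputable def rhoChar (x : PiG nn) : AddChar (PiG nn) ℂ where
  toFun := rho nn x
  map_zero_eq_one' := by simp [rho_eq_prod]
  map_add_eq_mul' y z := by
    simp [rho_eq_prod, mul_add, AddChar.map_add_eq_mul, Finset.prod_mul_distrib]

@[simp] lemma rhoChar_apply (x y : PiG nn) : rhoChar x y = rho nn x y := rfl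

lemma rhoChar_zero : rhoChar (0 : PiG nn) = 0 := by
  ext y
  simp [rho_eq_prod]

lemma rhoChar_injective : Function.Injective (rhoChar (nn := nn)) := by
  intro x y h
  funext i
  apply ZMod.injective_toCircle
  apply Subtype.ext
  simpa [rho_comm _ (Pi.single i 1), rho_single_one] using DFunLike.congr_fun h (Pi.single i 1)

lemma rhoChar_bijective : Function.Bijective (rhoChar (nn := nn)) := by
  rw [Fintype.bijective_iff_injective_and_card, AddChar.card_eq]
  exact ⟨rhoChar_injective, rfl⟩

lemma inner_harm (x y : PiG nn) :
    inner ℂ (harm nn g x) (harm nn g y) = (m : ℂ)⁻¹ * ∑ j, rhoChar (y - x) (g j) := by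
  rw [PiLp.inner_apply, Finset.mul_sum]
  refine Finset.sum_congr rfl fun j _ => ?_
  have hcoord : ∀ z, harm nn g z j = ((√m : ℝ) : ℂ)⁻¹ * rho nn (g j) z := fun z => rfl
  have hsq : ((√m : ℝ) : ℂ)⁻¹ * ((√m : ℝ) : ℂ)⁻¹ = (m : ℂ)⁻¹ := by
    rw [← mul_inv, ← Complex.ofReal_mul, Real.mul_self_sqrt (Nat.cast_nonneg m)]
    norm_num
  have hchar : rhoChar (y - x) (g j) = (starRingEnd ℂ) (rho nn (g j) x) * rho nn (g j) y := by
    rw [rhoChar_apply, rho_comm, ← rhoChar_apply, sub_eq_add_neg, AddChar.map_add_eq_mul,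
      AddChar.map_neg_eq_conj, rhoChar_apply, rhoChar_apply, mul_comm]
  rw [hcoord, hcoord, RCLike.inner_apply, map_mul, map_inv₀, Complex.conj_ofReal, hchar, ← hsq]
  ring

lemma ang_eq (x y : PiG nn) :
    ang nn g x y = √(Complex.normSq (∑ j, rhoChar (y - x) (g j)) / m ^ 2) := by
  rw [ang, inner_harm, Complex.norm_def, Complex.normSq_mul, Complex.normSq_inv,
    Complex.normSq_natCast, inv_mul_eq_div, sq]

lemma anglesSet_eq_image :
    anglesSet nn g =
      (fun ψ : AddChar (PiG nn) ℂ => √(Complex.normSq (∑ j, ψ (g j)) / m ^ 2)) '' {ψ | ψ ≠ 0} := by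
  ext a
  constructor
  · rintro ⟨x, y, hxy, rfl⟩
    refine ⟨rhoChar (y - x), fun h0 => hxy ?_, (ang_eq x y).symm⟩
    rw [← rhoChar_zero, rhoChar_injective.eq_iff, sub_eq_zero] at h0
    exact h0.symm
  · rintro ⟨ψ, hψ, rfl⟩
    obtain ⟨d, rfl⟩ := rhoChar_bijective.2 ψ
    refine ⟨0, d, fun h0 => hψ (by rw [← h0, rhoChar_zero]), ?_⟩
    rw [ang_eq, sub_zero]

variable {t : ℕ} {A : ℕ → AddSubgroup (PiG nn)} {lam : ℕ → ℕ}

lemma IsNestedDS.anglesSet_eq_image_levelNormSq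
    (h : IsNestedDS g t (fun j => (A j : Set (PiG nn))) lam) (hg : Function.Injective g)
    (ht : 1 ≤ t) (hlt : ∀ j < t, A j < A (j + 1)) :
    anglesSet nn g = (fun r => √(levelNormSq m A lam r / m ^ 2)) '' Set.Iic (t - 1) := by
  rw [anglesSet_eq_image]
  ext a
  constructor
  · rintro ⟨ψ, hψ, rfl⟩
    obtain ⟨r, hr, hψr⟩ := h.exists_normSq_eq_levelNormSq hg ht hψ
    exact ⟨r, hr, by simp only [hψr]⟩
  · rintro ⟨r, hr, rfl⟩
    obtain ⟨ψ, hψ, hψr⟩ := h.exists_addChar_normSq_eq_levelNormSq hg ht hlt hr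
    exact ⟨ψ, hψ, by simp only [hψr]⟩

lemma IsNestedDS.ncard_anglesSet_eq_two_iff
    (h : IsNestedDS g t (fun j => (A j : Set (PiG nn))) lam) (hm : 0 < m)
    (hg : Function.Injective g) (ht : 1 ≤ t) (hlt : ∀ j < t, A j < A (j + 1)) {a b : ℕ}
    (ha : a ≤ t - 1) (hb : b ≤ t - 1) (hab : levelNormSq m A lam a ≠ levelNormSq m A lam b) :
    (anglesSet nn g).ncard = 2 ↔ ∀ r ≤ t - 1,
      levelNormSq m A lam r = levelNormSq m A lam a ∨
        levelNormSq m A lam r = levelNormSq m A lam b := by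
  have hnonneg : ∀ q ≤ t - 1, (0 : ℝ) ≤ levelNormSq m A lam q / (m : ℝ) ^ 2 := fun q hq =>
    div_nonneg (by exact_mod_cast h.levelNormSq_nonneg hg ht hlt hq) (sq_nonneg _)
  have hinj : ∀ r ≤ t - 1, ∀ r' ≤ t - 1, √(levelNormSq m A lam r / (m : ℝ) ^ 2) =
      √(levelNormSq m A lam r' / (m : ℝ) ^ 2) ↔ levelNormSq m A lam r = levelNormSq m A lam r' :=
    fun r hr r' hr' => by
      rw [Real.sqrt_inj (hnonneg r hr) (hnonneg r' hr'), div_left_inj' (by positivity),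
        Int.cast_inj]
  rw [h.anglesSet_eq_image_levelNormSq hg ht hlt,
    Set.ncard_image_Iic_eq_two_iff _ ha hb ((hinj a ha b hb).not.mpr hab)]
  exact forall₂_congr fun r hr => by rw [hinj r hr a ha, hinj r hr b hb]

end HarmonicFrame

theorem statement18_general {k m : ℕ} (nn : Fin k → ℕ) [∀ i, NeZero (nn i)] (hm : 0 < m)
    (g : Fin m → PiG nn) (hg : Function.Injective g)
    (t : ℕ) (A : ℕ → AddSubgroup (PiG nn)) (lam : ℕ → ℕ)
    (hnds : IsNestedDS g t (fun j => (A j : Set (PiG nn))) lam)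
    (hproper : ¬ ∃ (A' : ℕ → Set (PiG nn)) (lam' : ℕ → ℕ), IsNestedDS g (t - 1) A' lam')
    (s : ℕ) (hs1 : 1 ≤ s) (hs2 : s ≤ t - 1)
    (hs : lam s ≠ lam (s + 1))
    (hsmin : ∀ j, 1 ≤ j → j < s → lam j = lam (j + 1)) :
    (Real.sqrt (1 / (m : ℝ) - (lam 1 : ℝ) / (m : ℝ) ^ 2) ∈ anglesSet nn g ∧
     Real.sqrt (Real.sqrt (1 / (m : ℝ) - (lam 1 : ℝ) / (m : ℝ) ^ 2) ^ 2 +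
        ((lam s : ℝ) - lam (s + 1)) * (Nat.card (A s) : ℝ) / (m : ℝ) ^ 2) ∈
       anglesSet nn g) ∧
    ((anglesSet nn g).ncard = 2 ↔
      ∀ r, s + 1 ≤ r → r ≤ t - 1 →
        (∑ j ∈ Finset.Icc s r, ((lam j : ℤ) - lam (j + 1)) * (Nat.card (A j) : ℤ)) = 0 ∨
        (∑ j ∈ Finset.Icc (s + 1) r,
            ((lam j : ℤ) - lam (j + 1)) * (Nat.card (A j) : ℤ)) = 0) := by
  have ht : 1 ≤ t := by omega
  have hlt := hnds.lt_succ_of_proper hproper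
  set c : ℕ → ℤ := fun j => ((lam j : ℤ) - lam (j + 1)) * Nat.card (A j)
  set V := levelNormSq m A lam
  have hV : ∀ r, V r = m - lam 1 + ∑ j ∈ Icc s r, c j := levelNormSq_eq_of_lam_eq hs1 hsmin
  have hV0 : V 0 = m - lam 1 := by simp [hV, Finset.Icc_eq_empty (show ¬ s ≤ 0 by omega)]
  have hVs : V s = V 0 + c s := by rw [hV, hV0, Finset.Icc_self, Finset.sum_singleton]
  have hcs : c s ≠ 0 := mul_ne_zero (sub_ne_zero.mpr (by exact_mod_cast hs))
    (Nat.cast_ne_zero.mpr Nat.card_pos.ne')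
  have hα₁ : 1 / (m : ℝ) - lam 1 / (m : ℝ) ^ 2 = V 0 / (m : ℝ) ^ 2 := by
    rw [hV0]; push_cast; field_simp
  have hmem : ∀ r ≤ t - 1, √(V r / (m : ℝ) ^ 2) ∈ anglesSet nn g := fun r hr =>
    hnds.anglesSet_eq_image_levelNormSq hg ht hlt ▸ ⟨r, hr, rfl⟩
  refine ⟨⟨hα₁ ▸ hmem 0 (Nat.zero_le _), ?_⟩, ?_⟩
  · have hV0_nonneg : (0 : ℝ) ≤ V 0 := by
      exact_mod_cast hnds.levelNormSq_nonneg hg ht hlt (Nat.zero_le _)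
    rw [hα₁, Real.sq_sqrt (div_nonneg hV0_nonneg (sq_nonneg _)), ← add_div]
    convert hmem s hs2 using 3
    simp [hVs, c]
  · rw [hnds.ncard_anglesSet_eq_two_iff hm hg ht hlt (Nat.zero_le _) hs2
      (fun h => hcs (by linarith)), ← sum_Icc_eq_zero_or_eq_iff]
    refine forall₂_congr fun r _ => ?_
    change V r = V 0 ∨ V r = V s ↔ ∑ j ∈ Icc s r, c j = 0 ∨ ∑ j ∈ Icc s r, c j = c s
    rw [hVs, hV r, hV0]
    constructor <;> rintro (h | h) <;> [left; right; left; right] <;> linarith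

/-- Let `S = {g_1, ..., g_m}` be a proper `(n, m, t)`-nested divisible
difference set for `G` relative to `(A, Λ)` with `t ≥ 2` (each `A j` a subgroup), and let
`s ∈ {1, ..., t-1}` be the smallest index with `Λ s ≠ Λ (s+1)`.  Set
`α₁ = √(1/m - Λ 1/m²)` and `α₂ = √(α₁² + (Λ s - Λ (s+1)) |A s| / m²)`.  If `F` is the
`G`-harmonic frame generated by `S`, then (1) `α₁` and `α₂` occur among the frame angles
of `F`, and (2) `F` is biangular iff for every `r ∈ {s+1, ..., t-1}` either
`∑_{j=s}^{r} (Λ j - Λ (j+1)) |A j| = 0` or `∑_{j=s+1}^{r} (Λ j - Λ (j+1)) |A j| = 0`. -/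
theorem statement18 {k m : ℕ} (nn : Fin k → ℕ) [∀ i, NeZero (nn i)] (hm : 0 < m)
    (g : Fin m → PiG nn) (hg : Function.Injective g)
    (t : ℕ) (ht : 2 ≤ t) (A : ℕ → AddSubgroup (PiG nn)) (lam : ℕ → ℕ)
    (hnds : IsNestedDS g t (fun j => (A j : Set (PiG nn))) lam)
    (hproper : ¬ ∃ (A' : ℕ → Set (PiG nn)) (lam' : ℕ → ℕ), IsNestedDS g (t - 1) A' lam')
    (s : ℕ) (hs1 : 1 ≤ s) (hs2 : s ≤ t - 1)
    (hs : lam s ≠ lam (s + 1))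
    (hsmin : ∀ j, 1 ≤ j → j < s → lam j = lam (j + 1)) :
    (Real.sqrt (1 / (m : ℝ) - (lam 1 : ℝ) / (m : ℝ) ^ 2) ∈ anglesSet nn g ∧
     Real.sqrt (Real.sqrt (1 / (m : ℝ) - (lam 1 : ℝ) / (m : ℝ) ^ 2) ^ 2 +
        ((lam s : ℝ) - lam (s + 1)) * (Nat.card (A s) : ℝ) / (m : ℝ) ^ 2) ∈
       anglesSet nn g) ∧
    ((anglesSet nn g).ncard = 2 ↔
      ∀ r, s + 1 ≤ r → r ≤ t - 1 →
        (∑ j ∈ Finset.Icc s r, ((lam j : ℤ) - lam (j + 1)) * (Nat.card (A j) : ℤ)) = 0 ∨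
        (∑ j ∈ Finset.Icc (s + 1) r,
            ((lam j : ℤ) - lam (j + 1)) * (Nat.card (A j) : ℤ)) = 0) :=
  statement18_general nn hm g hg t A lam hnds hproper s hs1 hs2 hs hsmin
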